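/- For the transform K(c) = √(|c'|)(v, κ) ∈ ℝ³, the directional derivative is D_{c,h}K = √(|c'|)( ½⟨D_s h, v⟩v + ⟨D_s h, n⟩n ; ⟨D_s² h, n⟩ − (3/2)κ⟨D_s h, v⟩ ), and consequently the pullback of the L² metric is G_c(h,h) = ∫ ⟨D_s²h,n⟩² − 3κ⟨D_s²h,n⟩⟨D_s h,v⟩ + ⟨D_s h,n⟩² + ¼(1+9κ²)⟨D_s h,v⟩² ds. -/

import Mathlib

open Real MeasureTheory intervalIntegral Function
open scoped RealInnerProductSpace

set_option maxHeartbeats 2000000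
noncomputable section

abbrev E2 := EuclideanSpace ℝ (Fin 2)
abbrev E3 := EuclideanSpace ℝ (Fin 3)

def V2 (x y : ℝ) : E2 := (WithLp.equiv 2 (Fin 2 → ℝ)).symm ![x, y]
def V3 (x y z : ℝ) : E3 := (WithLp.equiv 2 (Fin 3 → ℝ)).symm ![x, y, z]

/-- Rotation by `π/2` in the plane. -/
def rot (x : E2) : E2 := V2 (-(x 1)) (x 0)

/-- Unit tangent vector `v = c'/|c'|` of a plane curve. -/
def uT (c : ℝ → E2) (θ : ℝ) : E2 := ‖deriv c θ‖⁻¹ • deriv c θ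

/-- Unit normal vector `n`, the rotation of `v` by `π/2`. -/
def nor (c : ℝ → E2) (θ : ℝ) : E2 := rot (uT c θ)

/-- Arc-length derivative `D_s h = h'/|c'|` along the curve `c`. -/
def Ds (c : ℝ → E2) (h : ℝ → E2) (θ : ℝ) : E2 := ‖deriv c θ‖⁻¹ • deriv h θ

/-- Curvature `κ = ⟨D_s v, n⟩` of a plane curve. -/
def curvK (c : ℝ → E2) (θ : ℝ) : ℝ :=
  ⟪(‖deriv c θ‖⁻¹ • deriv (uT c) θ : E2), nor c θ⟫

/-- The transform `K(c) = √|c'| (v, κ)` inducing a second-order Sobolev-type metric. -/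
def Ktrans (c : ℝ → E2) (θ : ℝ) : E3 :=
  V3 (Real.sqrt ‖deriv c θ‖ * uT c θ 0)
     (Real.sqrt ‖deriv c θ‖ * uT c θ 1)
     (Real.sqrt ‖deriv c θ‖ * curvK c θ)

lemma inner_E2 (x y : E2) : ⟪x, y⟫ = x 0 * y 0 + x 1 * y 1 := by
  simp [PiLp.inner_apply, Fin.sum_univ_two, RCLike.inner_apply]; ring

lemma normsq_E2 (x : E2) : ‖x‖ ^ 2 = x 0 ^ 2 + x 1 ^ 2 := by
  rw [← real_inner_self_eq_norm_sq, inner_E2]; ring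

lemma rot_apply0 (x : E2) : rot x 0 = -(x 1) := rfl
lemma rot_apply1 (x : E2) : rot x 1 = x 0 := rfl
lemma smul_apply' (r : ℝ) (x : E2) (i : Fin 2) : (r • x) i = r * x i := rfl
lemma add_apply' (x y : E2) (i : Fin 2) : (x + y) i = x i + y i := rfl

lemma e2_ext {x y : E2} (h0 : x 0 = y 0) (h1 : x 1 = y 1) : x = y := by
  apply (WithLp.equiv 2 (Fin 2 → ℝ)).injective
  funext i; fin_cases i <;> assumption

lemma rot_smul (r : ℝ) (x : E2) : rot (r • x) = r • rot x := by
  apply e2_ext <;> simp [rot_apply0, rot_apply1, smul_apply'] <;> ring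

lemma rot_add (x y : E2) : rot (x + y) = rot x + rot y := by
  apply e2_ext <;> simp [rot_apply0, rot_apply1, add_apply'] <;> ring

lemma inner_rot_self (x : E2) : ⟪x, rot x⟫ = 0 := by
  simp [inner_E2, rot_apply0, rot_apply1]; ring

/-- frame identity -/
lemma frame_id (a b : E2) (i : Fin 2) :
    ‖a‖ ^ 2 * b i = ⟪b, a⟫ * a i + ⟪b, rot a⟫ * rot a i := by
  fin_cases i <;>
    simp [normsq_E2, inner_E2, rot_apply0, rot_apply1] <;> ring

/-- 2D determinant identity -/
lemma rot_id2 (a b p : E2) :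
    ‖a‖ ^ 2 * ⟪p, rot b⟫ = ⟪b, a⟫ * ⟪p, rot a⟫ - ⟪p, a⟫ * ⟪b, rot a⟫ := by
  simp [normsq_E2, inner_E2, rot_apply0, rot_apply1]; ring

lemma V3_apply0 (x y z : ℝ) : V3 x y z 0 = x := rfl
lemma V3_apply1 (x y z : ℝ) : V3 x y z 1 = y := rfl
lemma V3_apply2 (x y z : ℝ) : V3 x y z 2 = z := rfl

lemma e3_ext {x y : E3} (h0 : x 0 = y 0) (h1 : x 1 = y 1) (h2 : x 2 = y 2) : x = y := by
  apply (WithLp.equiv 2 (Fin 3 → ℝ)).injective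
  funext i; fin_cases i <;> assumption

lemma smul3_apply (r : ℝ) (x : E3) (i : Fin 3) : (r • x) i = r * x i := rfl

lemma normsq_E3 (x : E3) : ‖x‖ ^ 2 = x 0 ^ 2 + x 1 ^ 2 + x 2 ^ 2 := by
  rw [EuclideanSpace.norm_sq_eq]
  simp [Fin.sum_univ_three]

lemma hasDerivAt_V3 {f g k : ℝ → ℝ} {f' g' k' t : ℝ}
    (hf : HasDerivAt f f' t) (hg : HasDerivAt g g' t) (hk : HasDerivAt k k' t) :
    HasDerivAt (fun t => V3 (f t) (g t) (k t)) (V3 f' g' k') t := by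
  have hrep : ∀ x y z : ℝ, V3 x y z = x • V3 1 0 0 + y • V3 0 1 0 + z • V3 0 0 1 := by
    intro x y z
    apply e3_ext <;>
      simp [V3_apply0, V3_apply1, V3_apply2, smul3_apply, add_apply'] <;> ring
  have heq : (fun t => V3 (f t) (g t) (k t))
      = fun t => f t • V3 1 0 0 + g t • V3 0 1 0 + k t • V3 0 0 1 :=
    funext fun t => hrep _ _ _
  rw [heq, hrep f' g' k']
  exact ((hf.smul_const _).add (hg.smul_const _)).add (hk.smul_const _)

lemma hasDerivAt_norm_comp {f : ℝ → E2} {f' : E2} {θ : ℝ}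
    (hf : HasDerivAt f f' θ) (hne : f θ ≠ 0) :
    HasDerivAt (fun s => ‖f s‖) (⟪f θ, f'⟫ / ‖f θ‖) θ := by
  have hinner : HasDerivAt (fun s => ⟪f s, f s⟫) (⟪f θ, f'⟫ + ⟪f', f θ⟫) θ :=
    HasDerivAt.inner ℝ hf hf
  have hne2 : ⟪f θ, f θ⟫ ≠ 0 := by
    rw [real_inner_self_eq_norm_sq]
    exact pow_ne_zero _ (norm_ne_zero_iff.mpr hne)
  have := hinner.sqrt hne2
  have heq : (fun s => Real.sqrt ⟪f s, f s⟫) = fun s => ‖f s‖ := by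
    funext s; rw [real_inner_self_eq_norm_sq, Real.sqrt_sq (norm_nonneg _)]
  rw [heq] at this
  convert this using 1
  rw [real_inner_self_eq_norm_sq, Real.sqrt_sq (norm_nonneg _), real_inner_comm f' (f θ)]
  have : ‖f θ‖ ≠ 0 := norm_ne_zero_iff.mpr hne
  field_simp
  ring


lemma deriv_uT {e : ℝ → E2} {p : E2} {θ : ℝ}
    (he2 : HasDerivAt (deriv e) p θ) (hne : deriv e θ ≠ 0) :
    HasDerivAt (uT e)
      (‖deriv e θ‖⁻¹ • p
        + (-(⟪deriv e θ, p⟫ / ‖deriv e θ‖) / ‖deriv e θ‖ ^ 2) • deriv e θ) θ := by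
  have hr : ‖deriv e θ‖ ≠ 0 := norm_ne_zero_iff.mpr hne
  have hn := hasDerivAt_norm_comp he2 hne
  exact (hn.inv hr).smul he2

lemma curvK_eq {e : ℝ → E2} {p : E2} {θ : ℝ}
    (he2 : HasDerivAt (deriv e) p θ) (hne : deriv e θ ≠ 0) :
    curvK e θ = ⟪p, rot (deriv e θ)⟫ / ‖deriv e θ‖ ^ 3 := by
  have hr : ‖deriv e θ‖ ≠ 0 := norm_ne_zero_iff.mpr hne
  rw [curvK, (deriv_uT he2 hne).deriv]
  have hnor : nor e θ = ‖deriv e θ‖⁻¹ • rot (deriv e θ) := by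
    rw [nor, uT, rot_smul]
  rw [hnor]
  simp only [real_inner_smul_left, real_inner_smul_right, inner_add_left,
    inner_rot_self, mul_zero, zero_add]
  rw [add_zero, eq_div_iff (pow_ne_zero 3 hr)]
  field_simp

lemma Ktrans_eq {e : ℝ → E2} {p : E2} {θ : ℝ}
    (he2 : HasDerivAt (deriv e) p θ) (hne : deriv e θ ≠ 0) :
    Ktrans e θ = V3 (Real.sqrt ‖deriv e θ‖ * (‖deriv e θ‖⁻¹ * deriv e θ 0))
      (Real.sqrt ‖deriv e θ‖ * (‖deriv e θ‖⁻¹ * deriv e θ 1))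
      (Real.sqrt ‖deriv e θ‖ * (⟪p, rot (deriv e θ)⟫ / ‖deriv e θ‖ ^ 3)) := by
  rw [Ktrans, curvK_eq he2 hne]
  rfl


/-- The directional derivative of `K` is
`D_{c,h}K = √|c'| ( ½⟨D_s h, v⟩v + ⟨D_s h, n⟩n ; ⟨D_s² h, n⟩ − (3/2)κ⟨D_s h, v⟩ )`,
and the pullback of the `L²` metric is
`∫ ⟨D_s²h,n⟩² − 3κ⟨D_s²h,n⟩⟨D_s h,v⟩ + ⟨D_s h,n⟩² + ¼(1+9κ²)⟨D_s h,v⟩² ds`. -/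
theorem Ktrans_variation_and_pullback (c h : ℝ → E2)
    (hc : ContDiff ℝ (⊤ : ℕ∞) c) (hh : ContDiff ℝ (⊤ : ℕ∞) h)
    (hcper : Function.Periodic c (2 * π)) (hhper : Function.Periodic h (2 * π))
    (himm : ∀ θ, deriv c θ ≠ 0) :
    (∀ θ, deriv (fun t : ℝ => Ktrans (fun s => c s + t • h s) θ) 0
      = Real.sqrt ‖deriv c θ‖ •
          V3 (2⁻¹ * ⟪Ds c h θ, uT c θ⟫ * uT c θ 0 + ⟪Ds c h θ, nor c θ⟫ * nor c θ 0)
             (2⁻¹ * ⟪Ds c h θ, uT c θ⟫ * uT c θ 1 + ⟪Ds c h θ, nor c θ⟫ * nor c θ 1)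
             (⟪Ds c (Ds c h) θ, nor c θ⟫ - 3 / 2 * curvK c θ * ⟪Ds c h θ, uT c θ⟫))
    ∧ (∫ θ in (0:ℝ)..2 * π,
          ‖deriv (fun t : ℝ => Ktrans (fun s => c s + t • h s) θ) 0‖ ^ 2
        = ∫ θ in (0:ℝ)..2 * π,
            (⟪Ds c (Ds c h) θ, nor c θ⟫ ^ 2
              - 3 * curvK c θ * ⟪Ds c (Ds c h) θ, nor c θ⟫ * ⟪Ds c h θ, uT c θ⟫
              + ⟪Ds c h θ, nor c θ⟫ ^ 2
              + 4⁻¹ * (1 + 9 * curvK c θ ^ 2) * ⟪Ds c h θ, uT c θ⟫ ^ 2)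
              * ‖deriv c θ‖) := by
  have hc1 : Differentiable ℝ c := hc.differentiable (by simp)
  have hh1 : Differentiable ℝ h := hh.differentiable (by simp)
  have hcinf : ContDiff ℝ ((⊤:ℕ∞) : WithTop ℕ∞) c := hc.of_le (by simp)
  have hhinf : ContDiff ℝ ((⊤:ℕ∞) : WithTop ℕ∞) h := hh.of_le (by simp)
  have hc2 : Differentiable ℝ (deriv c) :=
    ((contDiff_infty_iff_deriv.mp hcinf).2).differentiable (by simp)
  have hh2 : Differentiable ℝ (deriv h) :=
    ((contDiff_infty_iff_deriv.mp hhinf).2).differentiable (by simp)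
  have key : ∀ θ, deriv (fun t : ℝ => Ktrans (fun s => c s + t • h s) θ) 0
      = Real.sqrt ‖deriv c θ‖ •
          V3 (2⁻¹ * ⟪Ds c h θ, uT c θ⟫ * uT c θ 0 + ⟪Ds c h θ, nor c θ⟫ * nor c θ 0)
             (2⁻¹ * ⟪Ds c h θ, uT c θ⟫ * uT c θ 1 + ⟪Ds c h θ, nor c θ⟫ * nor c θ 1)
             (⟪Ds c (Ds c h) θ, nor c θ⟫ - 3 / 2 * curvK c θ * ⟪Ds c h θ, uT c θ⟫) := by
    intro θ
    have hct : ∀ (t : ℝ) (s : ℝ), HasDerivAt (fun u => c u + t • h u)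
        (deriv c s + t • deriv h s) s :=
      fun t s => ((hc1 s).hasDerivAt).add (((hh1 s).hasDerivAt).const_smul t)
    have hct2 : ∀ t : ℝ, HasDerivAt (deriv (fun u => c u + t • h u))
        (deriv (deriv c) θ + t • deriv (deriv h) θ) θ := by
      intro t
      have hdct : deriv (fun u => c u + t • h u) = fun s => deriv c s + t • deriv h s :=
        funext fun s => (hct t s).deriv
      rw [hdct]
      exact ((hc2 θ).hasDerivAt).add (((hh2 θ).hasDerivAt).const_smul t)
    set a := deriv c θ with ha
    set b := deriv h θ with hb
    set p := deriv (deriv c) θ with hp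
    set q := deriv (deriv h) θ with hq
    have hane : a ≠ 0 := himm θ
    have hr0 : ‖a‖ ≠ 0 := norm_ne_zero_iff.mpr hane
    have hgd : HasDerivAt (fun t : ℝ => a + t • b) b 0 := by
      simpa [Pi.add_def] using (hasDerivAt_const (0:ℝ) a).add ((hasDerivAt_id (0:ℝ)).smul_const b)
    have hg2d : HasDerivAt (fun t : ℝ => p + t • q) q 0 := by
      simpa [Pi.add_def] using (hasDerivAt_const (0:ℝ) p).add ((hasDerivAt_id (0:ℝ)).smul_const q)
    have hgne : a + (0:ℝ) • b ≠ 0 := by simpa using hane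
    have hn : HasDerivAt (fun t : ℝ => ‖a + t • b‖) (⟪a, b⟫ / ‖a‖) 0 := by
      have := hasDerivAt_norm_comp hgd hgne
      simp only [zero_smul, add_zero] at this
      exact this
    have hsq : HasDerivAt (fun t : ℝ => Real.sqrt ‖a + t • b‖)
        (⟪a, b⟫ / ‖a‖ / (2 * Real.sqrt ‖a‖)) 0 := by
      have := hn.sqrt (by simpa using hr0)
      simp only [zero_smul, add_zero] at this
      exact this
    have hinv : HasDerivAt (fun t : ℝ => ‖a + t • b‖⁻¹)
        (-(⟪a, b⟫ / ‖a‖) / ‖a‖ ^ 2) 0 := by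
      have := hn.inv (by simpa using hr0)
      simp only [zero_smul, add_zero] at this
      exact this
    have hcomp : ∀ i : Fin 2, HasDerivAt (fun t : ℝ => (a + t • b) i) (b i) 0 := by
      intro i
      have heq : (fun t : ℝ => (a + t • b) i) = fun t => a i + t * b i := rfl
      rw [heq]
      simpa [Pi.add_def] using (hasDerivAt_const (0:ℝ) (a i)).add ((hasDerivAt_id (0:ℝ)).mul_const (b i))
    have hm : HasDerivAt (fun t : ℝ => ⟪p + t • q, rot (a + t • b)⟫)
        (⟪p, rot b⟫ + ⟪q, rot a⟫) 0 := by
      have hfe : (fun t : ℝ => ⟪p + t • q, rot (a + t • b)⟫)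
          = fun t => ⟪p + t • q, rot a + t • rot b⟫ :=
        funext fun t => by rw [rot_add, rot_smul]
      rw [hfe]
      have hrd : HasDerivAt (fun t : ℝ => rot a + t • rot b) (rot b) 0 := by
        simpa [Pi.add_def] using (hasDerivAt_const (0:ℝ) (rot a)).add
          ((hasDerivAt_id (0:ℝ)).smul_const (rot b))
      have := HasDerivAt.inner ℝ hg2d hrd
      simp only [zero_smul, add_zero] at this
      exact this
    have hpow : HasDerivAt (fun t : ℝ => ‖a + t • b‖ ^ 3)
        ((3:ℝ) * ‖a‖ ^ 2 * (⟪a, b⟫ / ‖a‖)) 0 := by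
      have := hn.pow 3
      simp only [zero_smul, add_zero, Pi.pow_def] at this
      norm_num at this
      convert this using 1
    have hdiv : HasDerivAt
        (fun t : ℝ => ⟪p + t • q, rot (a + t • b)⟫ / ‖a + t • b‖ ^ 3)
        (((⟪p, rot b⟫ + ⟪q, rot a⟫) * ‖a‖ ^ 3
          - ⟪p, rot a⟫ * ((3:ℝ) * ‖a‖ ^ 2 * (⟪a, b⟫ / ‖a‖))) / (‖a‖ ^ 3) ^ 2) 0 := by
      have := hm.div hpow (by simpa using pow_ne_zero 3 hr0)
      simp only [zero_smul, add_zero] at this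
      exact this
    have hphi0 : HasDerivAt
        (fun t : ℝ => Real.sqrt ‖a + t • b‖ * (‖a + t • b‖⁻¹ * (a + t • b) 0))
        (⟪a, b⟫ / ‖a‖ / (2 * Real.sqrt ‖a‖) * (‖a‖⁻¹ * a 0)
          + Real.sqrt ‖a‖ * (-(⟪a, b⟫ / ‖a‖) / ‖a‖ ^ 2 * a 0 + ‖a‖⁻¹ * b 0)) 0 := by
      have := hsq.mul (hinv.mul (hcomp 0))
      simp only [zero_smul, add_zero, Pi.mul_def] at this
      exact this
    have hphi1 : HasDerivAt
        (fun t : ℝ => Real.sqrt ‖a + t • b‖ * (‖a + t • b‖⁻¹ * (a + t • b) 1))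
        (⟪a, b⟫ / ‖a‖ / (2 * Real.sqrt ‖a‖) * (‖a‖⁻¹ * a 1)
          + Real.sqrt ‖a‖ * (-(⟪a, b⟫ / ‖a‖) / ‖a‖ ^ 2 * a 1 + ‖a‖⁻¹ * b 1)) 0 := by
      have := hsq.mul (hinv.mul (hcomp 1))
      simp only [zero_smul, add_zero, Pi.mul_def] at this
      exact this
    have hphi2 : HasDerivAt
        (fun t : ℝ => Real.sqrt ‖a + t • b‖
          * (⟪p + t • q, rot (a + t • b)⟫ / ‖a + t • b‖ ^ 3))
        (⟪a, b⟫ / ‖a‖ / (2 * Real.sqrt ‖a‖) * (⟪p, rot a⟫ / ‖a‖ ^ 3)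
          + Real.sqrt ‖a‖ * (((⟪p, rot b⟫ + ⟪q, rot a⟫) * ‖a‖ ^ 3
            - ⟪p, rot a⟫ * ((3:ℝ) * ‖a‖ ^ 2 * (⟪a, b⟫ / ‖a‖))) / (‖a‖ ^ 3) ^ 2)) 0 := by
      have := hsq.mul hdiv
      simp only [zero_smul, add_zero] at this
      exact this
    have hG := hasDerivAt_V3 hphi0 hphi1 hphi2
    have hFeq : (fun t : ℝ => Ktrans (fun s => c s + t • h s) θ) =ᶠ[nhds 0]
        (fun t : ℝ => V3
          (Real.sqrt ‖a + t • b‖ * (‖a + t • b‖⁻¹ * (a + t • b) 0))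
          (Real.sqrt ‖a + t • b‖ * (‖a + t • b‖⁻¹ * (a + t • b) 1))
          (Real.sqrt ‖a + t • b‖
            * (⟪p + t • q, rot (a + t • b)⟫ / ‖a + t • b‖ ^ 3))) := by
      have hcont : Continuous (fun t : ℝ => a + t • b) :=
        continuous_const.add (continuous_id.smul continuous_const)
      have hev : ∀ᶠ t in nhds (0:ℝ), a + t • b ≠ 0 :=
        hcont.continuousAt.eventually_ne (by simpa using hane)
      filter_upwards [hev] with t ht
      have h1 : deriv (fun s => c s + t • h s) θ = a + t • b := (hct t θ).deriv
      have h2 : HasDerivAt (deriv (fun s => c s + t • h s)) (p + t • q) θ := hct2 t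
      rw [Ktrans_eq h2 (by rw [h1]; exact ht), h1]
    have hF := hG.congr_of_eventuallyEq hFeq
    rw [hF.deriv]
    -- now the algebraic identification
    have hκ : curvK c θ = ⟪p, rot a⟫ / ‖a‖ ^ 3 := curvK_eq ((hc2 θ).hasDerivAt) hane
    have hnor : nor c θ = ‖a‖⁻¹ • rot a := by
      rw [nor, uT, ← ha, rot_smul]
    have hDsh : Ds c h θ = ‖a‖⁻¹ • b := rfl
    have huT : uT c θ = ‖a‖⁻¹ • a := rfl
    have hDd : HasDerivAt (Ds c h)
        (‖a‖⁻¹ • q + (-(⟪a, p⟫ / ‖a‖) / ‖a‖ ^ 2) • b) θ := by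
      have hninv : HasDerivAt (fun s => ‖deriv c s‖⁻¹)
          (-(⟪a, p⟫ / ‖a‖) / ‖a‖ ^ 2) θ :=
        (hasDerivAt_norm_comp ((hc2 θ).hasDerivAt) hane).inv hr0
      exact hninv.smul ((hh2 θ).hasDerivAt)
    have hDs2 : Ds c (Ds c h) θ
        = ‖a‖⁻¹ • (‖a‖⁻¹ • q + (-(⟪a, p⟫ / ‖a‖) / ‖a‖ ^ 2) • b) := by
      show ‖deriv c θ‖⁻¹ • deriv (Ds c h) θ = _
      rw [hDd.deriv, ← ha]
    apply e3_ext <;>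
      simp only [V3_apply0, V3_apply1, V3_apply2, smul3_apply, hκ, hnor, hDsh, huT, hDs2,
        real_inner_smul_left, real_inner_smul_right, inner_add_left, smul_apply',
        real_inner_comm b a]
    · have hpos : (0:ℝ) < ‖a‖ := norm_pos_iff.mpr hane
      have hfr := frame_id a b 0
      generalize hwdef : Real.sqrt ‖a‖ = w
      have hw : w ^ 2 = ‖a‖ := by rw [← hwdef]; exact Real.sq_sqrt (norm_nonneg a)
      have hw0 : w ≠ 0 := by rw [← hwdef]; exact Real.sqrt_ne_zero'.mpr hpos
      rw [← hw] at hfr ⊢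
      have hb0 : b 0 = (⟪b, a⟫ * a 0 + ⟪b, rot a⟫ * rot a 0) / w ^ 4 := by
        rw [eq_div_iff (pow_ne_zero 4 hw0)]
        linear_combination hfr
      rw [hb0]
      field_simp
      ring
    · have hpos : (0:ℝ) < ‖a‖ := norm_pos_iff.mpr hane
      have hfr := frame_id a b 1
      generalize hwdef : Real.sqrt ‖a‖ = w
      have hw : w ^ 2 = ‖a‖ := by rw [← hwdef]; exact Real.sq_sqrt (norm_nonneg a)
      have hw0 : w ≠ 0 := by rw [← hwdef]; exact Real.sqrt_ne_zero'.mpr hpos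
      rw [← hw] at hfr ⊢
      have hb1 : b 1 = (⟪b, a⟫ * a 1 + ⟪b, rot a⟫ * rot a 1) / w ^ 4 := by
        rw [eq_div_iff (pow_ne_zero 4 hw0)]
        linear_combination hfr
      rw [hb1]
      field_simp
      ring
    · have hpos : (0:ℝ) < ‖a‖ := norm_pos_iff.mpr hane
      rw [real_inner_comm p a]
      have hrel := rot_id2 a b p
      generalize hwdef : Real.sqrt ‖a‖ = w
      have hw : w ^ 2 = ‖a‖ := by rw [← hwdef]; exact Real.sq_sqrt (norm_nonneg a)
      have hw0 : w ≠ 0 := by rw [← hwdef]; exact Real.sqrt_ne_zero'.mpr hpos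
      rw [← hw] at hrel ⊢
      have hS : ⟪p, rot b⟫ = (⟪b, a⟫ * ⟪p, rot a⟫ - ⟪p, a⟫ * ⟪b, rot a⟫) / w ^ 4 := by
        rw [eq_div_iff (pow_ne_zero 4 hw0)]
        linear_combination hrel
      rw [hS]
      field_simp
      ring
  refine ⟨key, ?_⟩
  apply intervalIntegral.integral_congr
  intro θ _
  dsimp only
  rw [key θ, norm_smul, mul_pow, normsq_E3]
  simp only [V3_apply0, V3_apply1, V3_apply2, Real.norm_eq_abs, sq_abs,
    Real.sq_sqrt (norm_nonneg _)]
  have hv : uT c θ 0 ^ 2 + uT c θ 1 ^ 2 = 1 := by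
    have h1 : ‖uT c θ‖ = 1 := by
      rw [uT, norm_smul, norm_inv, norm_norm]
      exact inv_mul_cancel₀ (norm_ne_zero_iff.mpr (himm θ))
    have := normsq_E2 (uT c θ)
    rw [h1] at this
    linarith [this]
  have hnor0 : nor c θ 0 = -(uT c θ 1) := rfl
  have hnor1 : nor c θ 1 = uT c θ 0 := rfl
  rw [hnor0, hnor1]
  linear_combination (‖deriv c θ‖ * (4⁻¹ * ⟪Ds c h θ, uT c θ⟫ ^ 2
    + ⟪Ds c h θ, nor c θ⟫ ^ 2)) * hv
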